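/- arXiv:2008.10507 — 2 statements merged into one kernel-verified Lean document; each statement's English description precedes it below -/
import Mathlib

section
/- At every point (η,v)∈(0,L)×ℝ³ with ζ(η;v)>0 (where ζ is differentiable), the weight ζ is annihilated by the geometrically corrected transport operator: v_η ∂_η ζ − (ε/(R₁−εη))(v_φ² ∂_{v_η}ζ − v_ηv_φ ∂_{v_φ}ζ) − (ε/(R₂−εη))(v_ψ² ∂_{v_η}ζ − v_ηv_ψ ∂_{v_ψ}ζ) = 0. -/
/-!
Write `ζ = √Q` with `Q = |v|² − a₁² v_φ² − a₂² v_ψ²`, where `aᵢ = (Rᵢ − εη)/Rᵢ`. The transport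
operator is a first-order differential operator, so it acts on `√Q` as `(2√Q)⁻¹` times its action
on `Q`, and on `Q` it vanishes identically: since `∂_{v_η} Q = 2 v_η` and
`∂_{v_φ} Q = 2 (1 − a₁²) v_φ`, the `R₁`-term equals `−2ε a₁² v_η v_φ² / (R₁ − εη)
= −2ε (R₁ − εη) v_η v_φ² / R₁²`, which cancels the `v_φ`-part of `v_η ∂_η Q`; likewise for `R₂`.
-/

open Real MeasureTheory

noncomputable section

/-- Velocity space ℝ³ with Euclidean norm. -/
abbrev V3 : Type := EuclideanSpace ℝ (Fin 3)

/-- Japanese bracket ⟨v⟩ = (1+|v|²)^{1/2}. -/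
def jbr (v : V3) : ℝ := Real.sqrt (1 + ‖v‖ ^ 2)

/-- Weight ⟨v⟩^ϑ e^{ϱ|v|²}. -/
def wt (ϑ ϱ : ℝ) (v : V3) : ℝ := jbr v ^ ϑ * Real.exp (ϱ * ‖v‖ ^ 2)

/-- Global Maxwellian μ(v) = (2π)⁻¹ e^{-|v|²/2}. -/
def Mw (v : V3) : ℝ := (2 * π)⁻¹ * Real.exp (-‖v‖ ^ 2 / 2)

/-- Hard-sphere collision frequency ν. -/
def nuF (q₀ : ℝ) (v : V3) : ℝ :=
  π ^ 2 * q₀ *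
    ((2 * ‖v‖ + 1 / ‖v‖) * (∫ z in (0:ℝ)..‖v‖, Real.exp (-z ^ 2)) + Real.exp (-‖v‖ ^ 2))

/-- Kernel k₁. -/
def ker1 (q₀ : ℝ) (u v : V3) : ℝ :=
  π * q₀ * ‖u - v‖ * Real.exp (-‖u‖ ^ 2 / 2 - ‖v‖ ^ 2 / 2)

/-- Kernel k₂. -/
def ker2 (q₀ : ℝ) (u v : V3) : ℝ :=
  (2 * π * q₀ / ‖u - v‖) *
    Real.exp (-‖u - v‖ ^ 2 / 4 - (‖u‖ ^ 2 - ‖v‖ ^ 2) ^ 2 / (4 * ‖u - v‖ ^ 2))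

/-- Kernel k = k₂ − k₁. -/
def ker (q₀ : ℝ) (u v : V3) : ℝ := ker2 q₀ u v - ker1 q₀ u v

/-- Integral operator K. -/
def Kop (q₀ : ℝ) (f : V3 → ℝ) (v : V3) : ℝ := ∫ u : V3, ker q₀ u v * f u

/-- Linearized Boltzmann operator L = ν I − K. -/
def Lop (q₀ : ℝ) (f : V3 → ℝ) (v : V3) : ℝ := nuF q₀ v * f v - Kop q₀ f v

/-- Basis e₀,…,e₄ of the null space N of L. -/
def eB : Fin 5 → V3 → ℝ :=
  ![fun v => Real.sqrt (Mw v),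
    fun v => v 0 * Real.sqrt (Mw v),
    fun v => v 1 * Real.sqrt (Mw v),
    fun v => v 2 * Real.sqrt (Mw v),
    fun v => (‖v‖ ^ 2 - 3) / 2 * Real.sqrt (Mw v)]

/-- Membership in N = span{e₀,…,e₄}. -/
def inN (f : V3 → ℝ) : Prop :=
  ∃ c : Fin 5 → ℝ, ∀ v : V3, f v = ∑ j : Fin 5, c j * eB j v

/-- `p` is the L² orthogonal projection of `f` onto N. -/
def IsProjN (f p : V3 → ℝ) : Prop :=
  inN p ∧ ∀ j : Fin 5, ∫ v : V3, (f v - p v) * eB j v = 0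

/-- Length of the rescaled half-space, L = ε^{-1/2}. -/
def Lm (ε : ℝ) : ℝ := ε ^ (-(1:ℝ)/2)

/-- Reflection R[v] = (−v_η, v_φ, v_ψ). -/
def Rv (v : V3) : V3 :=
  (WithLp.equiv 2 (Fin 3 → ℝ)).symm fun i => if i = 0 then -(v i) else v i

/-- Partial derivative in the i-th velocity direction. -/
def pdv (i : Fin 3) (f : V3 → ℝ) (v : V3) : ℝ :=
  fderiv ℝ f v (EuclideanSpace.single i (1 : ℝ))

/-- Solution of the ε-Milne problem with geometric correction with in-flow
data `h` and source `S`. -/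
def IsMilne (q₀ R₁ R₂ ε : ℝ) (h : V3 → ℝ) (S : ℝ → V3 → ℝ) (g : ℝ → V3 → ℝ) : Prop :=
  (∀ η ∈ Set.Icc (0:ℝ) (Lm ε), ∀ v : V3,
      v 0 * deriv (fun s => g s v) η
        - ε / (R₁ - ε * η) * ((v 1) ^ 2 * pdv 0 (g η) v - v 0 * v 1 * pdv 1 (g η) v)
        - ε / (R₂ - ε * η) * ((v 2) ^ 2 * pdv 0 (g η) v - v 0 * v 2 * pdv 2 (g η) v)
        + Lop q₀ (g η) v = S η v) ∧
  (∀ v : V3, 0 < v 0 → g 0 v = h v) ∧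
  (∀ v : V3, g (Lm ε) v = g (Lm ε) (Rv v))

/-- Sufficient decay in velocity, uniformly on [0, L]. -/
def Decays (ϑ ϱ ε : ℝ) (g : ℝ → V3 → ℝ) : Prop :=
  ∃ M : ℝ, ∀ η ∈ Set.Icc (0:ℝ) (Lm ε), ∀ v : V3, wt ϑ ϱ v * |g η v| ≤ M

/-- Weighted L∞ bound |h|_{∞,ϑ,ϱ} ≤ C₀ for in-flow data. -/
def HBound (ϑ ϱ C₀ : ℝ) (h : V3 → ℝ) : Prop :=
  ∀ v : V3, 0 < v 0 → wt ϑ ϱ v * |h v| ≤ C₀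

/-- Weighted L∞ bound ‖e^{Kη}S‖_{∞,ϑ,ϱ} ≤ C₀ for the source. -/
def SBound (ϑ ϱ K C₀ ε : ℝ) (S : ℝ → V3 → ℝ) : Prop :=
  ∀ η ∈ Set.Icc (0:ℝ) (Lm ε), ∀ v : V3,
    Real.exp (K * η) * wt ϑ ϱ v * |S η v| ≤ C₀

/-- Boundary correction h̃ = D̃₀e₀ + D̃₂e₂ + D̃₃e₃ + D̃₄e₄ ∈ span{e₀,e₂,e₃,e₄}. -/
def corr (D0 D2 D3 D4 : ℝ) (v : V3) : ℝ :=
  D0 * eB 0 v + D2 * eB 2 v + D3 * eB 3 v + D4 * eB 4 v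

/-- Geometric weight ζ. -/
def zeta (R₁ R₂ ε η : ℝ) (v : V3) : ℝ :=
  Real.sqrt (‖v‖ ^ 2 - ((R₁ - ε * η) / R₁) ^ 2 * (v 1) ^ 2
    - ((R₂ - ε * η) / R₂) ^ 2 * (v 2) ^ 2)

theorem div_mul_div_sq_self (ε x R : ℝ) : ε / x * (x / R) ^ 2 = ε * x / R ^ 2 := by
  rcases eq_or_ne x 0 with rfl | hx
  · simp
  · field_simp

theorem hasDerivAt_sub_mul_div_sq (R ε η : ℝ) :
    HasDerivAt (fun s => ((R - ε * s) / R) ^ 2) (-(2 * ε * (R - ε * η) / R ^ 2)) η := by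
  have h := (((hasDerivAt_id' η).const_mul ε).const_sub R).div_const R
  exact (h.fun_pow 2).congr_deriv (by ring)

theorem hasFDerivAt_euclideanSpace_apply_sq {ι : Type*} [Fintype ι] (i : ι)
    (v : EuclideanSpace ℝ ι) :
    HasFDerivAt (fun w : EuclideanSpace ℝ ι => w i ^ 2)
      ((2 * v i) • (EuclideanSpace.proj i : EuclideanSpace ℝ ι →L[ℝ] ℝ)) v := by
  have h := (EuclideanSpace.proj i : EuclideanSpace ℝ ι →L[ℝ] ℝ).hasFDerivAt (x := v)
  exact (h.pow 2).congr_fderiv (by norm_num)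

theorem pdv_sqrt {f : V3 → ℝ} {v : V3} (i : Fin 3) (hf : DifferentiableAt ℝ f v)
    (hv : f v ≠ 0) :
    pdv i (fun w => √(f w)) v = pdv i f v / (2 * √(f v)) := by
  rw [pdv, pdv, (hf.hasFDerivAt.sqrt hv).fderiv, smul_apply, smul_eq_mul, one_div_mul_eq_div]

def transport (R₁ R₂ ε : ℝ) (g : ℝ → V3 → ℝ) (η : ℝ) (v : V3) : ℝ :=
  v 0 * deriv (fun s => g s v) η
    - ε / (R₁ - ε * η) * ((v 1) ^ 2 * pdv 0 (g η) v - v 0 * v 1 * pdv 1 (g η) v)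
    - ε / (R₂ - ε * η) * ((v 2) ^ 2 * pdv 0 (g η) v - v 0 * v 2 * pdv 2 (g η) v)

theorem transport_sqrt (R₁ R₂ ε : ℝ) {g : ℝ → V3 → ℝ} {η : ℝ} {v : V3}
    (hη : DifferentiableAt ℝ (fun s => g s v) η) (hv : DifferentiableAt ℝ (g η) v)
    (h0 : g η v ≠ 0) :
    transport R₁ R₂ ε (fun s w => √(g s w)) η v = transport R₁ R₂ ε g η v / (2 * √(g η v)) := by
  simp only [transport, pdv_sqrt _ hv h0, deriv_sqrt hη h0]
  ring

def zetaRadicand (R₁ R₂ ε η : ℝ) (v : V3) : ℝ :=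
  ‖v‖ ^ 2 - ((R₁ - ε * η) / R₁) ^ 2 * (v 1) ^ 2 - ((R₂ - ε * η) / R₂) ^ 2 * (v 2) ^ 2

section zetaRadicand

variable (R₁ R₂ ε η : ℝ) (v : V3)

theorem hasDerivAt_zetaRadicand_eta :
    HasDerivAt (fun s => zetaRadicand R₁ R₂ ε s v)
      (2 * ε * (R₁ - ε * η) / R₁ ^ 2 * v 1 ^ 2 + 2 * ε * (R₂ - ε * η) / R₂ ^ 2 * v 2 ^ 2) η :=
  (((hasDerivAt_const η (‖v‖ ^ 2)).sub ((hasDerivAt_sub_mul_div_sq R₁ ε η).mul_const (v 1 ^ 2))).sub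
    ((hasDerivAt_sub_mul_div_sq R₂ ε η).mul_const (v 2 ^ 2))).congr_deriv (by ring)

theorem hasFDerivAt_zetaRadicand :
    HasFDerivAt (zetaRadicand R₁ R₂ ε η)
      (2 • innerSL ℝ v
        - ((R₁ - ε * η) / R₁) ^ 2 • (2 * v 1) • EuclideanSpace.proj (1 : Fin 3)
        - ((R₂ - ε * η) / R₂) ^ 2 • (2 * v 2) • EuclideanSpace.proj (2 : Fin 3)) v :=
  ((hasStrictFDerivAt_norm_sq v).hasFDerivAt.sub
    ((hasFDerivAt_euclideanSpace_apply_sq 1 v).const_mul _)).sub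
    ((hasFDerivAt_euclideanSpace_apply_sq 2 v).const_mul _)

theorem pdv_zetaRadicand_zero : pdv 0 (zetaRadicand R₁ R₂ ε η) v = 2 * v 0 := by
  simp [pdv, (hasFDerivAt_zetaRadicand R₁ R₂ ε η v).fderiv, EuclideanSpace.inner_single_right]

theorem pdv_zetaRadicand_one :
    pdv 1 (zetaRadicand R₁ R₂ ε η) v = 2 * v 1 - ((R₁ - ε * η) / R₁) ^ 2 * (2 * v 1) := by
  simp [pdv, (hasFDerivAt_zetaRadicand R₁ R₂ ε η v).fderiv, EuclideanSpace.inner_single_right]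

theorem pdv_zetaRadicand_two :
    pdv 2 (zetaRadicand R₁ R₂ ε η) v = 2 * v 2 - ((R₂ - ε * η) / R₂) ^ 2 * (2 * v 2) := by
  simp [pdv, (hasFDerivAt_zetaRadicand R₁ R₂ ε η v).fderiv, EuclideanSpace.inner_single_right]

theorem transport_zetaRadicand : transport R₁ R₂ ε (zetaRadicand R₁ R₂ ε) η v = 0 := by
  rw [transport, (hasDerivAt_zetaRadicand_eta R₁ R₂ ε η v).deriv, pdv_zetaRadicand_zero,
    pdv_zetaRadicand_one, pdv_zetaRadicand_two]
  linear_combination (-2 * v 0 * v 1 ^ 2) * div_mul_div_sq_self ε (R₁ - ε * η) R₁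
    - (2 * v 0 * v 2 ^ 2) * div_mul_div_sq_self ε (R₂ - ε * η) R₂

end zetaRadicand

theorem zeta_annihilated_by_transport_general (R₁ R₂ ε : ℝ)
    (η : ℝ)
    (v : V3) (hζ : 0 < zeta R₁ R₂ ε η v) :
    v 0 * deriv (fun s => zeta R₁ R₂ ε s v) η
      - ε / (R₁ - ε * η) *
          ((v 1) ^ 2 * pdv 0 (zeta R₁ R₂ ε η) v - v 0 * v 1 * pdv 1 (zeta R₁ R₂ ε η) v)
      - ε / (R₂ - ε * η) *
          ((v 2) ^ 2 * pdv 0 (zeta R₁ R₂ ε η) v - v 0 * v 2 * pdv 2 (zeta R₁ R₂ ε η) v)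
      = 0 := by
  have hpos : 0 < zetaRadicand R₁ R₂ ε η v := Real.sqrt_pos.mp hζ
  change transport R₁ R₂ ε (fun s w => √(zetaRadicand R₁ R₂ ε s w)) η v = 0
  rw [transport_sqrt R₁ R₂ ε (hasDerivAt_zetaRadicand_eta R₁ R₂ ε η v).differentiableAt
    (hasFDerivAt_zetaRadicand R₁ R₂ ε η v).differentiableAt hpos.ne', transport_zetaRadicand,
    zero_div]

/-- The geometric weight ζ is annihilated by the geometrically corrected
transport operator. -/
theorem zeta_annihilated_by_transport (R₁ R₂ ε : ℝ)
    (hR₁ : 0 < R₁) (hR₂ : 0 < R₂) (hε₀ : 0 < ε) (hε₁ : ε < 1)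
    (η : ℝ) (hη₀ : 0 < η) (hηL : η < Lm ε)
    (hηR₁ : ε * η < R₁) (hηR₂ : ε * η < R₂)
    (v : V3) (hζ : 0 < zeta R₁ R₂ ε η v) :
    v 0 * deriv (fun s => zeta R₁ R₂ ε s v) η
      - ε / (R₁ - ε * η) *
          ((v 1) ^ 2 * pdv 0 (zeta R₁ R₂ ε η) v - v 0 * v 1 * pdv 1 (zeta R₁ R₂ ε η) v)
      - ε / (R₂ - ε * η) *
          ((v 2) ^ 2 * pdv 0 (zeta R₁ R₂ ε η) v - v 0 * v 2 * pdv 2 (zeta R₁ R₂ ε η) v)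
      = 0 :=
  zeta_annihilated_by_transport_general R₁ R₂ ε η v hζ

end
end

section
/- There exists a constant C>0 (depending only on q₀) such that for all u,v∈ℝ³ with u≠v: |k(u,v)| ≤ C(|u−v| + 1/|u−v|)·exp(−(1/8)|u−v|² − (1/8)(|u|²−|v|²)²/|u−v|²). -/
open Real MeasureTheory

noncomputable section

/- Both kernels are bounded by the Gaussian weight `exp (-(1/8) r² - (1/8) d²/r²)`, with `r = |u - v|`
and `d = |u|² - |v|²`: for `k₂` one only halves its exponent; for `k₁` the Cauchy–Schwarz bound
`d² ≤ r² |u + v|²` and the parallelogram law give `|u|² + |v|² ≥ (r² + d²/r²)/2`. -/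

section InnerProductSpace

variable {F : Type*} [NormedAddCommGroup F] [InnerProductSpace ℝ F]

theorem real_inner_sub_add_eq_norm_sq_sub_norm_sq (u v : F) :
    inner ℝ (u - v) (u + v) = ‖u‖ ^ 2 - ‖v‖ ^ 2 := by
  rw [inner_sub_left, inner_add_right, inner_add_right, real_inner_comm v u,
    real_inner_self_eq_norm_sq, real_inner_self_eq_norm_sq]
  ring

theorem sq_norm_sq_sub_norm_sq_le (u v : F) :
    (‖u‖ ^ 2 - ‖v‖ ^ 2) ^ 2 ≤ ‖u - v‖ ^ 2 * ‖u + v‖ ^ 2 := by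
  rw [← real_inner_sub_add_eq_norm_sq_sub_norm_sq, ← mul_pow, ← sq_abs]
  exact pow_le_pow_left₀ (abs_nonneg _) (abs_real_inner_le_norm _ _) 2

theorem sq_norm_sq_sub_norm_sq_div_le (u v : F) :
    (‖u‖ ^ 2 - ‖v‖ ^ 2) ^ 2 / ‖u - v‖ ^ 2 ≤ ‖u + v‖ ^ 2 :=
  div_le_of_le_mul₀ (by positivity) (by positivity)
    ((sq_norm_sq_sub_norm_sq_le u v).trans_eq (mul_comm _ _))

theorem neg_norm_sq_add_norm_sq_div_two_le (u v : F) :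
    -‖u‖ ^ 2 / 2 - ‖v‖ ^ 2 / 2 ≤
      -(1/8) * ‖u - v‖ ^ 2 - (1/8) * (‖u‖ ^ 2 - ‖v‖ ^ 2) ^ 2 / ‖u - v‖ ^ 2 := by
  have hquot := sq_norm_sq_sub_norm_sq_div_le u v
  have hpar : ‖u - v‖ ^ 2 + ‖u + v‖ ^ 2 = 2 * ‖u‖ ^ 2 + 2 * ‖v‖ ^ 2 := by
    rw [norm_sub_sq_real, norm_add_sq_real]; ring
  have : 0 ≤ (‖u‖ ^ 2 - ‖v‖ ^ 2) ^ 2 / ‖u - v‖ ^ 2 := by positivity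
  rw [mul_div_assoc]
  linarith [sq_nonneg ‖u - v‖]

end InnerProductSpace

section Kernel

variable {q₀ : ℝ}

theorem abs_ker1_le (hq₀ : 0 ≤ q₀) (u v : V3) :
    |ker1 q₀ u v| ≤ π * q₀ * ‖u - v‖ * Real.exp (-(1/8) * ‖u - v‖ ^ 2
      - (1/8) * (‖u‖ ^ 2 - ‖v‖ ^ 2) ^ 2 / ‖u - v‖ ^ 2) := by
  rw [ker1, abs_of_nonneg (by positivity)]
  gcongr _ * Real.exp ?_
  exact neg_norm_sq_add_norm_sq_div_two_le u v

theorem abs_ker2_le (hq₀ : 0 ≤ q₀) (u v : V3) :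
    |ker2 q₀ u v| ≤ 2 * π * q₀ / ‖u - v‖ * Real.exp (-(1/8) * ‖u - v‖ ^ 2
      - (1/8) * (‖u‖ ^ 2 - ‖v‖ ^ 2) ^ 2 / ‖u - v‖ ^ 2) := by
  rw [ker2, abs_of_nonneg (by positivity)]
  gcongr _ * Real.exp ?_
  have : 0 ≤ (‖u‖ ^ 2 - ‖v‖ ^ 2) ^ 2 / ‖u - v‖ ^ 2 := by positivity
  rw [mul_div_assoc, mul_comm 4, ← div_div]
  linarith [sq_nonneg ‖u - v‖]

theorem abs_ker_le (hq₀ : 0 ≤ q₀) (u v : V3) :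
    |ker q₀ u v| ≤ 2 * π * q₀ * (‖u - v‖ + 1 / ‖u - v‖) * Real.exp (-(1/8) * ‖u - v‖ ^ 2
      - (1/8) * (‖u‖ ^ 2 - ‖v‖ ^ 2) ^ 2 / ‖u - v‖ ^ 2) := by
  set G := Real.exp (-(1/8) * ‖u - v‖ ^ 2 - (1/8) * (‖u‖ ^ 2 - ‖v‖ ^ 2) ^ 2 / ‖u - v‖ ^ 2)
  have hk₁ : π * q₀ * ‖u - v‖ * G ≤ 2 * π * q₀ * ‖u - v‖ * G := by
    gcongr
    linarith [pi_pos]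
  calc |ker q₀ u v| ≤ |ker2 q₀ u v| + |ker1 q₀ u v| := abs_sub _ _
    _ ≤ 2 * π * q₀ / ‖u - v‖ * G + 2 * π * q₀ * ‖u - v‖ * G := by
      linarith [abs_ker1_le hq₀ u v, abs_ker2_le hq₀ u v]
    _ = 2 * π * q₀ * (‖u - v‖ + 1 / ‖u - v‖) * G := by ring

end Kernel

/-- Pointwise bound on the hard-sphere Boltzmann kernel k. -/
theorem kernel_pointwise_bound (q₀ : ℝ) (hq₀ : 0 < q₀) :
    ∃ C : ℝ, 0 < C ∧ ∀ u v : V3, u ≠ v →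
      |ker q₀ u v| ≤ C * (‖u - v‖ + 1 / ‖u - v‖) *
        Real.exp (-(1/8) * ‖u - v‖ ^ 2
          - (1/8) * (‖u‖ ^ 2 - ‖v‖ ^ 2) ^ 2 / ‖u - v‖ ^ 2) :=
  ⟨2 * π * q₀, by positivity, fun u v _ => abs_ker_le hq₀.le u v⟩

end
end
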